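/- The five generating functions g₁ = 1, g₂ = u, g₃ = u² − u_x², g₄ = (e^{−x}·u_x)^{1/2}, g₅ = (e^{−x}·u_x)^{1/2}·(u + u_x) satisfy, on the domain u_x > 0, the semi-direct-sum commutation relations of sl(2,ℝ) ⋉ A_{2.1}: [g₁,g₂] = g₁, [g₁,g₃] = 2g₂, [g₂,g₃] = g₃, [g₁,g₅] = g₄, [g₂,g₄] = −½·g₄, [g₂,g₅] = ½·g₅, [g₃,g₄] = −g₅, [g₁,g₄] = 0, [g₃,g₅] = 0, [g₄,g₅] = 0. -/

import Mathlib

/-- Partial derivative in direction `i` of a function on `ℝ⁵ = Fin 5 → ℝ`.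
Coordinates: 0 = t, 1 = x, 2 = u, 3 = p (= u_t), 4 = q (= u_x). -/
noncomputable def pd (i : Fin 5) (f : (Fin 5 → ℝ) → ℝ) (v : Fin 5 → ℝ) : ℝ :=
  fderiv ℝ f v (Pi.single i 1)

/-- The contact bracket of two generating functions. -/
noncomputable def cbracket (f g : (Fin 5 → ℝ) → ℝ) (v : Fin 5 → ℝ) : ℝ :=
  (pd 3 g v * pd 2 f v - pd 3 f v * pd 2 g v) * v 3
  + (pd 4 g v * pd 2 f v - pd 4 f v * pd 2 g v) * v 4
  + pd 3 g v * pd 0 f v - pd 3 f v * pd 0 g v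
  + pd 4 g v * pd 1 f v - pd 4 f v * pd 1 g v
  + f v * pd 2 g v - g v * pd 2 f v

/-!
All five generators are independent of `t` and `p`. The bracket with `g₁ = 1` is `∂_u`, and the
bracket with `g₂ = u` is `p ∂_p + r ∂_r + u ∂_u − 1`, which multiplies a function homogeneous of
degree `k` in `(u, p, r)` by `k − 1`; `g₃`, `g₄`, `g₅` have degrees `2`, `1/2`, `3/2`. The three
remaining brackets are direct computations once `d√(e^{−x} r)` is written as
`½ √(e^{−x} r) (dr / r − dx)`, which removes `e^{−x}` from every bracket.
-/

open Real

local notation "dw" j:max => (ContinuousLinearMap.proj j : (Fin 5 → ℝ) →L[ℝ] ℝ)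

section

variable {f g : (Fin 5 → ℝ) → ℝ} {v : Fin 5 → ℝ}

theorem pd_eq_of_hasFDerivAt {D : (Fin 5 → ℝ) →L[ℝ] ℝ} (h : HasFDerivAt f D v) (i : Fin 5) :
    pd i f v = D (Pi.single i 1) := by
  rw [pd, h.fderiv]

theorem pd_const (c : ℝ) (i : Fin 5) : pd i (fun _ => c) v = 0 := by
  simp [pd]

theorem pd_coord (i j : Fin 5) : pd i (fun w => w j) v = if j = i then 1 else 0 := by
  simp [pd_eq_of_hasFDerivAt (hasFDerivAt_apply (𝕜 := ℝ) j v), Pi.single_apply]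

theorem cbracket_one_left : cbracket (fun _ => 1) g v = pd 2 g v := by
  simp [cbracket, pd_const]

theorem cbracket_coord_two_left :
    cbracket (fun w => w 2) g v = pd 3 g v * v 3 + pd 4 g v * v 4 + v 2 * pd 2 g v - g v := by
  simp [cbracket, pd_coord]

end

theorem hasFDerivAt_sq_sub_sq (i j : Fin 5) (v : Fin 5 → ℝ) :
    HasFDerivAt (fun w : Fin 5 → ℝ => w i ^ 2 - w j ^ 2) ((2 * v i) • dw i - (2 * v j) • dw j) v := by
  refine (((hasFDerivAt_apply i v).pow 2).sub ((hasFDerivAt_apply j v).pow 2)).congr_fderiv ?_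
  ext w
  simp

theorem hasFDerivAt_sqrt_exp_neg_mul {i j : Fin 5} {v : Fin 5 → ℝ} (hv : 0 < v j) :
    HasFDerivAt (fun w => √(exp (-w i) * w j))
      ((√(exp (-v i) * v j) / 2) • ((v j)⁻¹ • dw j - dw i)) v := by
  have hpos : 0 < exp (-v i) * v j := mul_pos (exp_pos _) hv
  refine (((hasFDerivAt_apply i v).neg.exp.mul (hasFDerivAt_apply j v)).sqrt hpos.ne').congr_fderiv ?_
  ext w
  have hsq := sq_sqrt hpos.le
  simp
  field_simp
  linear_combination (v j * w i - w j) * hsq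

theorem hasFDerivAt_sqrt_exp_neg_mul_mul_add {i j : Fin 5} (k : Fin 5) {v : Fin 5 → ℝ}
    (hv : 0 < v j) :
    HasFDerivAt (fun w => √(exp (-w i) * w j) * (w k + w j))
      (√(exp (-v i) * v j) • (dw k + dw j) +
        (v k + v j) • (√(exp (-v i) * v j) / 2) • ((v j)⁻¹ • dw j - dw i)) v :=
  (hasFDerivAt_sqrt_exp_neg_mul hv).mul ((hasFDerivAt_apply (𝕜 := ℝ) k v).add (hasFDerivAt_apply j v))

/-- The five generating functions 1, u, u² − u_x², (e^{−x}u_x)^{1/2},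
(e^{−x}u_x)^{1/2}(u + u_x) satisfy the commutation relations of
sl(2,ℝ) ⋉ A_{2.1} on the domain u_x > 0. -/
theorem sl2_semidirect_realization (v : Fin 5 → ℝ) (hv : v 4 > 0) :
    let g₁ : (Fin 5 → ℝ) → ℝ := fun _ => 1
    let g₂ : (Fin 5 → ℝ) → ℝ := fun w => w 2
    let g₃ : (Fin 5 → ℝ) → ℝ := fun w => (w 2) ^ 2 - (w 4) ^ 2
    let g₄ : (Fin 5 → ℝ) → ℝ := fun w => Real.sqrt (Real.exp (- w 1) * w 4)
    let g₅ : (Fin 5 → ℝ) → ℝ :=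
      fun w => Real.sqrt (Real.exp (- w 1) * w 4) * (w 2 + w 4)
    cbracket g₁ g₂ v = g₁ v ∧
    cbracket g₁ g₃ v = 2 * g₂ v ∧
    cbracket g₂ g₃ v = g₃ v ∧
    cbracket g₁ g₅ v = g₄ v ∧
    cbracket g₂ g₄ v = - (1 / 2) * g₄ v ∧
    cbracket g₂ g₅ v = (1 / 2) * g₅ v ∧
    cbracket g₃ g₄ v = - g₅ v ∧
    cbracket g₁ g₄ v = 0 ∧
    cbracket g₃ g₅ v = 0 ∧
    cbracket g₄ g₅ v = 0 := by
  dsimp only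
  have d₃ := pd_eq_of_hasFDerivAt (hasFDerivAt_sq_sub_sq 2 4 v)
  have d₄ := pd_eq_of_hasFDerivAt (hasFDerivAt_sqrt_exp_neg_mul (i := 1) hv)
  have d₅ := pd_eq_of_hasFDerivAt (hasFDerivAt_sqrt_exp_neg_mul_mul_add (i := 1) 2 hv)
  refine ⟨?_, ?_, ?_, ?_, ?_, ?_, ?_, ?_, ?_, ?_⟩ <;>
    (try simp only [cbracket_one_left, cbracket_coord_two_left]) <;>
    simp [cbracket, d₃, d₄, d₅, pd_coord] <;>
    field_simp <;> ring
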